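/- arXiv:2003.10597 — 2 statements merged into one kernel-verified Lean document; each statement's English description precedes it below -/
import Mathlib

section
/- Let C and C' be smooth projective curves of genus at least 2 over F_q, with fixed Abel–Jacobi embeddings into their Jacobians. Suppose ψ : J_C(\bar{F}_q) → J_{C'}(\bar{F}_q) is a bijection restricting to a group isomorphism J_C(F_{q^n}) → J_{C'}(F_{q^n}) for every n ≥ 1, and suppose that for every n and every character χ of J_C(F_{q^n}) the L-functions satisfy L(t, C⊗F_{q^n}, χ) = L(t, C'⊗F_{q^n}, χ∘ψ^{-1}). Then ψ(C(F_{q^n})) = C'(F_{q^n}) for all n ≥ 1. -/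
open Finsupp Function

/-- Abstract model of a smooth projective geometrically irreducible curve over a finite
field `F_q`, recorded via its set of closed points, their degrees, its genus, and the
subgroup of principal divisors (divisors of rational functions) inside the divisor group
(the free abelian group on closed points). -/
structure AlgCurve : Type 1 where
  /-- closed points of the curve -/
  Point : Type
  /-- degree of a closed point (residue field degree over `F_q`) -/
  deg : Point → ℕ+
  /-- the genus of the curve -/
  genus : ℕ
  /-- the subgroup of principal divisors -/
  Principal : AddSubgroup (Point →₀ ℤ)
  /-- a principal divisor has degree zero -/
  principal_degree_zero : ∀ D ∈ Principal, (D.sum fun P n => n * (deg P : ℤ)) = 0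
  /-- over a finite field there are finitely many effective divisors of each degree -/
  finEff : ∀ d : ℤ,
    {D : Point →₀ ℤ | (∀ P, 0 ≤ D P) ∧ (D.sum fun P n => n * (deg P : ℤ)) = d}.Finite

namespace AlgCurve

variable (C : AlgCurve)

/-- Divisors on `C`: the free abelian group on the closed points. -/
abbrev Divisor := C.Point →₀ ℤ

/-- The degree homomorphism on divisors. -/
noncomputable def degree : Divisor C →+ ℤ :=
  Finsupp.liftAddHom fun P => AddMonoidHom.mk' (fun n => n * (C.deg P : ℤ)) (by
    intro a b; ring)

lemma degree_eq_sum (D : Divisor C) :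
    C.degree D = D.sum fun P n => n * (C.deg P : ℤ) := by
  simp [degree, Finsupp.liftAddHom_apply, Finsupp.sum]


@[simp] lemma degree_single (P : C.Point) (n : ℤ) :
    C.degree (Finsupp.single P n) = n * (C.deg P : ℤ) := by
  simp [degree_eq_sum, Finsupp.sum_single_index]

/-- A divisor is effective if all its coefficients are nonnegative. -/
def Effective (D : Divisor C) : Prop := ∀ P, 0 ≤ D P

/-- Two divisors are linearly equivalent if they differ by a principal divisor. -/
def LinEquiv (D D' : Divisor C) : Prop := D - D' ∈ C.Principal

/-- The divisor class group (Picard group) of `C`. -/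
abbrev Cl := (C.Point →₀ ℤ) ⧸ C.Principal

/-- The degree homomorphism on the divisor class group. -/
noncomputable def degCl : C.Cl →+ ℤ :=
  QuotientAddGroup.lift C.Principal C.degree (by
    intro D hD
    simp only [AddMonoidHom.mem_ker, degree_eq_sum]
    exact C.principal_degree_zero D hD)

/-- The class of a divisor in the Picard group. -/
noncomputable abbrev cl (D : Divisor C) : C.Cl := QuotientAddGroup.mk D

@[simp] lemma degCl_cl (D : Divisor C) : C.degCl (C.cl D) = C.degree D := rfl

/-- The group of degree zero divisor classes: the group `J_C(F_q)` of rational points of the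
Jacobian of `C`. -/
noncomputable abbrev Pic0 : AddSubgroup C.Cl := C.degCl.ker

/-- The degree-zero class of a degree-zero divisor, as an element of `Pic0`. -/
noncomputable def cls (D : Divisor C) (h : C.degree D = 0) : C.Pic0 :=
  ⟨C.cl D, by simpa using h⟩

/-- The set of effective divisors of a given degree (finite, by `finEff`). -/
noncomputable def effOfDeg (d : ℤ) : Finset (Divisor C) :=
  (C.finEff d).toFinset.filter fun _ => True

lemma mem_effOfDeg {d : ℤ} {D : Divisor C} :
    D ∈ C.effOfDeg d ↔ C.Effective D ∧ C.degree D = d := by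
  simp [effOfDeg, Set.Finite.mem_toFinset, Effective, degree_eq_sum]

/-- The L-function `L(t, C, χ) = Σ_{D ≥ 0} χ([D - deg(D)·D₁]) t^{deg D}` attached to a
function `χ` on the group of degree-zero divisor classes and a degree one divisor `D₁`. -/
noncomputable def Lfun (D1 : Divisor C) (h1 : C.degree D1 = 1) (χ : C.Pic0 → ℂ) :
    PowerSeries ℂ :=
  PowerSeries.mk fun d =>
    ∑ D ∈ (C.effOfDeg d).attach,
      χ (C.cls (D.1 - (d : ℤ) • D1) (by
        have := (C.mem_effOfDeg.mp D.2).2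
        simp [map_sub, this, h1, mul_comm]))

end AlgCurve

open AlgCurve

/-- The system of constant field extensions `C ⊗ F_{q^n}` of a smooth projective curve `C`
over `F_q`, with the (base changes of a) fixed degree-one divisor `D₁` furnishing the
Abel–Jacobi embeddings, and the group `Jbar = J_C(F̄_q)` of geometric points of the Jacobian
as the union of the groups `J_C(F_{q^n}) = Pic⁰(C ⊗ F_{q^n})`. -/
structure CurveSystem : Type 1 where
  /-- the curve `C ⊗ F_{q^n}` -/
  C : ℕ+ → AlgCurve
  /-- the fixed degree-one divisor `D₁` (base changed to `F_{q^n}`) -/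
  D1 : ∀ n, Divisor (C n)
  deg_D1 : ∀ n, (C n).degree (D1 n) = 1
  /-- the geometric points `J_C(F̄_q)` of the Jacobian -/
  Jbar : Type
  [grp : AddCommGroup Jbar]
  /-- the inclusion of `J_C(F_{q^n}) = Pic⁰(C ⊗ F_{q^n})` into `J_C(F̄_q)` -/
  ι : ∀ n, (C n).Pic0 →+ Jbar
  ι_inj : ∀ n, Function.Injective (ι n)
  /-- compatibility of the inclusions `J_C(F_{q^n}) ≤ J_C(F_{q^m})` for `n ∣ m` -/
  mono : ∀ {n m : ℕ+}, n ∣ m → (ι n).range ≤ (ι m).range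
  /-- every geometric point of the Jacobian is rational over some `F_{q^n}` -/
  cover : ∀ x : Jbar, ∃ n y, ι n y = x

attribute [instance] CurveSystem.grp

/-- The image `C(F_{q^n}) ⊆ J_C(F̄_q)` of the `F_{q^n}`-rational points of the curve under
the Abel-Jacobi embedding `P ↦ [P - D₁]`. -/
noncomputable def CurveSystem.curvePts (S : CurveSystem) (n : ℕ+) : Set S.Jbar :=
  {x | ∃ (P : (S.C n).Point) (h : (S.C n).deg P = 1),
    x = S.ι n ((S.C n).cls (Finsupp.single P 1 - S.D1 n)
      (by simp [h, S.deg_D1 n]))}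

/-!
The coefficient of `t` in `L(t, C, χ)` is the character sum `∑ χ([P - D₁])` over the degree-one
points `P`, i.e. the value at `χ` of the multiset of Abel–Jacobi images of `C(F_{q^n})`.
Complex characters separate the points of any abelian group (via `ℚ/ℤ`, which is injective),
and by Dedekind's lemma the evaluations `χ ↦ χ a` are then linearly independent, so these
character sums determine the multiset. Hence `e n` carries the point classes of `C` onto
those of `C'`.
-/

namespace AddCircle

noncomputable def ratToReal : AddCircle (1 : ℚ) →+ AddCircle (1 : ℝ) :=
  QuotientAddGroup.map _ _ (Rat.castHom ℝ).toAddMonoidHom <| by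
    rw [AddSubgroup.zmultiples_le]
    simp

lemma ratToReal_injective : Function.Injective ratToReal := by
  rw [injective_iff_map_eq_zero]
  intro x hx
  induction x using QuotientAddGroup.induction_on with
  | H q =>
    obtain ⟨n, hn⟩ := AddSubgroup.mem_zmultiples_iff.mp ((QuotientAddGroup.eq_zero_iff _).mp hx)
    rw [QuotientAddGroup.eq_zero_iff, AddSubgroup.mem_zmultiples_iff]
    refine ⟨n, ?_⟩
    have hn' : ((n : ℚ) : ℝ) = q := by simpa using hn
    simpa using (Rat.cast_injective hn' : (n : ℚ) = q)

end AddCircle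

namespace AddChar

variable {G : Type*} [AddCommGroup G]

lemma exists_apply_ne_one_of_ne_zero {a : G} (ha : a ≠ 0) : ∃ χ : AddChar G ℂ, χ a ≠ 1 := by
  obtain ⟨c, hc⟩ := CharacterModule.exists_character_apply_ne_zero_of_ne_zero ha
  let ξ : AddChar (AddCircle (1 : ℚ)) ℂ :=
    (Circle.coeHom.compAddChar AddCircle.toCircle_addChar).compAddMonoidHom AddCircle.ratToReal
  have hξ : Function.Injective ξ :=
    Subtype.val_injective.comp
      ((AddCircle.injective_toCircle one_ne_zero).comp AddCircle.ratToReal_injective)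
  refine ⟨ξ.compAddMonoidHom c, fun h => hc (hξ ?_)⟩
  rw [map_zero_eq_one]
  exact h

lemma injective_eval : Function.Injective fun a : G => (fun χ : AddChar G ℂ => χ a) := by
  intro a b hab
  by_contra hne
  obtain ⟨χ, hχ⟩ := exists_apply_ne_one_of_ne_zero (sub_ne_zero.mpr hne)
  apply hχ
  have hab' : χ a = χ b := congrFun hab χ
  rw [sub_eq_add_neg, map_add_eq_mul, hab', ← map_add_eq_mul, add_neg_cancel, map_zero_eq_one]

end AddChar

lemma Multiset.eq_of_sum_map_addChar_eq {G : Type*} [AddCommGroup G] {M N : Multiset G}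
    (h : ∀ χ : AddChar G ℂ, (M.map χ).sum = (N.map χ).sum) : M = N := by
  classical
  let ev : G → (AddChar G ℂ →* ℂ) := fun a =>
    { toFun := fun χ => χ a, map_one' := rfl, map_mul' := fun _ _ => rfl }
  -- Dedekind: distinct characters of the monoid `AddChar G ℂ` are linearly independent.
  have hli : LinearIndependent ℂ (fun a χ => χ a : G → AddChar G ℂ → ℂ) :=
    (linearIndependent_monoidHom _ ℂ).comp ev
      fun a b hab => AddChar.injective_eval (congrArg DFunLike.coe hab)
  have hsum : ∀ K : Multiset G, (fun χ : AddChar G ℂ => (K.map χ).sum) =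
      Finsupp.linearCombination ℂ (fun a χ => χ a) (K.toFinsupp.mapRange Nat.cast Nat.cast_zero) := by
    intro K
    funext χ
    rw [Finsupp.linearCombination_apply, Finsupp.sum_mapRange_index (by simp), Finsupp.sum,
      Multiset.toFinsupp_support, Finset.sum_multiset_map_count]
    simp
  have hcount := hli ((hsum M).symm.trans ((funext h).trans (hsum N)))
  exact Multiset.toFinsupp.injective
    (Finsupp.mapRange_injective _ Nat.cast_zero Nat.cast_injective hcount)

namespace AlgCurve

variable {C : AlgCurve}

lemma cls_congr {D D' : Divisor C} (hDD : D = D') (h : C.degree D = 0) (h' : C.degree D' = 0) :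
    C.cls D h = C.cls D' h' := by
  subst hDD; rfl

lemma one_le_deg (P : C.Point) : (1 : ℤ) ≤ C.deg P := by exact_mod_cast (C.deg P).pos

lemma Effective.coeff_mul_deg_le_degree {D : Divisor C} (hD : C.Effective D) (P : C.Point) :
    D P * C.deg P ≤ C.degree D := by
  classical
  rw [degree_eq_sum, Finsupp.sum_of_support_subset D (Finset.subset_insert P D.support)
    (fun Q n => n * (C.deg Q : ℤ)) (fun _ _ => zero_mul _)]
  exact Finset.single_le_sum (fun Q _ => mul_nonneg (hD Q) (by positivity))
    (Finset.mem_insert_self P _)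

lemma Effective.eq_zero_of_degree_eq_zero {D : Divisor C} (hD : C.Effective D)
    (h : C.degree D = 0) : D = 0 := by
  ext P
  have := hD.coeff_mul_deg_le_degree P
  have := hD P
  have := C.one_le_deg P
  simp only [Finsupp.coe_zero, Pi.zero_apply]
  nlinarith

lemma effective_degree_one_iff {D : Divisor C} :
    C.Effective D ∧ C.degree D = 1 ↔ ∃ P, C.deg P = 1 ∧ D = Finsupp.single P 1 := by
  classical
  constructor
  · rintro ⟨hD, hdeg⟩
    obtain ⟨P, hP⟩ : ∃ P, D P ≠ 0 := by
      by_contra! h0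
      simp [show D = 0 from Finsupp.ext h0] at hdeg
    have hle := hD.coeff_mul_deg_le_degree P
    have hdeg1 := C.one_le_deg P
    have hDP : D P = 1 := by have := hD P; nlinarith [lt_of_le_of_ne this (Ne.symm hP)]
    have hPdeg : (C.deg P : ℤ) = 1 := by nlinarith
    refine ⟨P, PNat.coe_eq_one_iff.mp (by exact_mod_cast hPdeg), ?_⟩
    have hrest : C.Effective (D - Finsupp.single P 1) := fun Q => by
      by_cases hQ : Q = P
      · subst hQ; simp [hDP]
      · simpa [Finsupp.single_apply, Ne.symm hQ] using hD Q
    have := hrest.eq_zero_of_degree_eq_zero (by simp [map_sub, hdeg, hPdeg])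
    exact sub_eq_zero.mp this
  · rintro ⟨P, hP, rfl⟩
    refine ⟨fun Q => ?_, by simp [hP]⟩
    rw [Finsupp.single_apply]
    split_ifs <;> omega

variable (C) in
noncomputable def pointClasses (D1 : Divisor C) (h1 : C.degree D1 = 1) : Multiset C.Pic0 :=
  (C.effOfDeg 1).attach.val.map fun D => C.cls (D.1 - D1) (by
    rw [map_sub, (C.mem_effOfDeg.mp D.2).2, h1, sub_self])

lemma mem_pointClasses {D1 : Divisor C} {h1 : C.degree D1 = 1} {x : C.Pic0} :
    x ∈ C.pointClasses D1 h1 ↔ ∃ (P : C.Point) (h : C.deg P = 1),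
      x = C.cls (Finsupp.single P 1 - D1) (by simp [h, h1]) := by
  simp only [pointClasses, Multiset.mem_map, Finset.mem_val, Finset.mem_attach, true_and,
    Subtype.exists, mem_effOfDeg, effective_degree_one_iff]
  constructor
  · rintro ⟨D, ⟨P, hP, rfl⟩, rfl⟩
    exact ⟨P, hP, rfl⟩
  · rintro ⟨P, hP, rfl⟩
    exact ⟨_, ⟨P, hP, rfl⟩, rfl⟩

lemma coeff_one_Lfun (D1 : Divisor C) (h1 : C.degree D1 = 1) (χ : C.Pic0 → ℂ) :
    PowerSeries.coeff 1 (C.Lfun D1 h1 χ) = ((C.pointClasses D1 h1).map χ).sum := by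
  rw [Lfun, PowerSeries.coeff_mk, pointClasses, Multiset.map_map, Finset.sum_eq_multiset_sum]
  refine congrArg Multiset.sum (Multiset.map_congr rfl fun D _ => congrArg χ (cls_congr ?_ _ _))
  simp

end AlgCurve

lemma CurveSystem.curvePts_eq_image (S : CurveSystem) (n : ℕ+) :
    S.curvePts n = S.ι n '' {x | x ∈ (S.C n).pointClasses (S.D1 n) (S.deg_D1 n)} := by
  ext y
  simp only [curvePts, Set.mem_image, mem_pointClasses]
  constructor
  · rintro ⟨P, hP, rfl⟩
    exact ⟨_, ⟨P, hP, rfl⟩, rfl⟩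
  · rintro ⟨x, ⟨P, hP, rfl⟩, rfl⟩
    exact ⟨P, hP, rfl⟩

theorem psi_maps_curve_points_onto_curve_points_general
    (S S' : CurveSystem)
    (ψ : S.Jbar → S'.Jbar)
    (e : ∀ n, (S.C n).Pic0 ≃+ (S'.C n).Pic0)
    (he : ∀ n x, ψ (S.ι n x) = S'.ι n (e n x))
    (hL : ∀ (n : ℕ+) (χ : AddChar ((S.C n).Pic0) ℂ),
      (S.C n).Lfun (S.D1 n) (S.deg_D1 n) (fun x => χ x)
        = (S'.C n).Lfun (S'.D1 n) (S'.deg_D1 n) (fun y => χ ((e n).symm y))) :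
    ∀ n : ℕ+, ψ '' S.curvePts n = S'.curvePts n := by
  intro n
  have hpts : ((S.C n).pointClasses (S.D1 n) (S.deg_D1 n)).map (e n)
      = (S'.C n).pointClasses (S'.D1 n) (S'.deg_D1 n) := by
    refine Multiset.eq_of_sum_map_addChar_eq fun χ => ?_
    have h1 := congrArg (PowerSeries.coeff 1) (hL n (χ.compAddMonoidHom (e n)))
    simpa only [coeff_one_Lfun, Multiset.map_map, comp_apply, AddChar.compAddMonoidHom_apply,
      AddMonoidHom.coe_coe, AddEquiv.apply_symm_apply] using h1
  have hpts_set : e n '' {x | x ∈ (S.C n).pointClasses (S.D1 n) (S.deg_D1 n)}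
      = {y | y ∈ (S'.C n).pointClasses (S'.D1 n) (S'.deg_D1 n)} := by
    ext y
    simp only [← hpts, Set.mem_image, Set.mem_ofPred_eq, Multiset.mem_map]
  rw [S.curvePts_eq_image, S'.curvePts_eq_image, ← hpts_set, Set.image_image, Set.image_image]
  simp only [he]

/-- Let `C` and `C'` be smooth projective curves of genus at least two over
`F_q`, with fixed Abel–Jacobi embeddings into their Jacobians.  Suppose
`ψ : J_C(F̄_q) → J_{C'}(F̄_q)` is a bijection restricting to a group isomorphism
`J_C(F_{q^n}) → J_{C'}(F_{q^n})` for every `n ≥ 1` (the isomorphisms `e n`), and suppose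
that for every `n` and every character `χ` of `J_C(F_{q^n})` the `L`-functions satisfy
`L(t, C ⊗ F_{q^n}, χ) = L(t, C' ⊗ F_{q^n}, χ ∘ ψ⁻¹)`.  Then
`ψ(C(F_{q^n})) = C'(F_{q^n})` for all `n ≥ 1`. -/
theorem psi_maps_curve_points_onto_curve_points
    (S S' : CurveSystem)
    (hg : ∀ n, 2 ≤ (S.C n).genus) (hg' : ∀ n, 2 ≤ (S'.C n).genus)
    (ψ : S.Jbar → S'.Jbar) (hψ : Function.Bijective ψ)
    (e : ∀ n, (S.C n).Pic0 ≃+ (S'.C n).Pic0)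
    (he : ∀ n x, ψ (S.ι n x) = S'.ι n (e n x))
    (hL : ∀ (n : ℕ+) (χ : AddChar ((S.C n).Pic0) ℂ),
      (S.C n).Lfun (S.D1 n) (S.deg_D1 n) (fun x => χ x)
        = (S'.C n).Lfun (S'.D1 n) (S'.deg_D1 n) (fun y => χ ((e n).symm y))) :
    ∀ n : ℕ+, ψ '' S.curvePts n = S'.curvePts n :=
  psi_maps_curve_points_onto_curve_points_general S S' ψ e he hL
end

section
/- Let E and E' be elliptic curves over F_q and suppose there exist isogenies φ : E → E' and φ' : E → E' of coprime degrees m and m'. Then for every n ≥ 1, the groups E(F_{q^n}) and E'(F_{q^n}) are isomorphic as abelian groups. -/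
open scoped WeierstrassCurve.Affine
open scoped Classical

notation:max W:max "⟮" S:max "⟯" => WeierstrassCurve.Affine.Point (WeierstrassCurve.Affine.baseChange W S)

/-!
Let `e ≠ 0` kill both point groups and split `e = s * t`, where every prime factor of `s` divides
`m` and `t` is prime to `m`. Then `s` is prime to `m'`, so `m' t²` and `m s²` are coprime and
`k m' t² + l m s² = 1` for some integers `k, l`. The homomorphisms `t ψ + s φ` and
`k t ψd + l s φd` are mutually inverse: in either composite the mixed terms carry the factor
`s t = e` and vanish, and what is left is multiplication by `k m' t² + l m s²`.
-/

instance WeierstrassCurve.Affine.Point.finite {R : Type*} [CommRing R] [Finite R]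
    (W : WeierstrassCurve.Affine R) : Finite W.Point :=
  have : Finite (WithZero {xy : R × R // ∃ _ : W.Nonsingular xy.1 xy.2, True}) :=
    inferInstanceAs (Finite (Option _))
  .of_equiv _ ((nonsingularPointEquivSubtype (p := fun _ => True) trivial).symm.trans
    (Equiv.subtypeUnivEquiv fun _ => trivial))

theorem Nat.exists_mul_eq_coprime_of_coprime {m m' : ℕ} (h : m.Coprime m') {e : ℕ} (he : e ≠ 0) :
    ∃ s t, s * t = e ∧ s.Coprime m' ∧ t.Coprime m ∧ s.Coprime t := by
  induction e using Nat.strong_induction_on with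
  | _ e ih =>
  by_cases hem : e.Coprime m
  · exact ⟨1, e, one_mul e, Nat.coprime_one_left m', hem, Nat.coprime_one_left e⟩
  obtain ⟨p, hp, ⟨e', rfl⟩, hpm⟩ := Nat.Prime.not_coprime_iff_dvd.mp hem
  have he' : e' ≠ 0 := right_ne_zero_of_mul he
  obtain ⟨s, t, rfl, hs, ht, hst⟩ := ih e' (lt_mul_left (Nat.pos_of_ne_zero he') hp.one_lt) he'
  have hpt : p.Coprime t := (ht.coprime_dvd_right hpm).symm
  exact ⟨p * s, t, mul_assoc p s t, (h.coprime_dvd_left hpm).mul_left hs, ht, hpt.mul_left hst⟩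

section

variable {A B : Type*} [AddCommGroup A] [AddCommGroup B] {m m' : ℕ}
  {u : A →+ B} {v : B →+ A} {w : A →+ B} {z : B →+ A}

theorem nonempty_addEquiv_of_isCoprime_mul_sq
    (hu : ∀ x, v (u x) = m • x) (hu' : ∀ y, u (v y) = m • y)
    (hw : ∀ x, z (w x) = m' • x) (hw' : ∀ y, w (z y) = m' • y) (s t : ℤ)
    (hA : ∀ x : A, (s * t) • x = 0) (hB : ∀ y : B, (s * t) • y = 0)
    (hcop : IsCoprime ((m' : ℤ) * t ^ 2) (m * s ^ 2)) : Nonempty (A ≃+ B) := by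
  obtain ⟨k, l, hkl⟩ := hcop
  refine ⟨(t • w + s • u).toAddEquiv ((k * t) • z + (l * s) • v) ?_ ?_⟩
  · ext x
    simp only [AddMonoidHom.comp_apply, AddMonoidHom.add_apply, AddMonoidHom.smul_apply, map_add,
      map_zsmul, hw, hu, AddMonoidHom.id_apply]
    linear_combination (norm := module) k • hA (z (u x)) + l • hA (v (w x)) + hkl • x
  · ext y
    simp only [AddMonoidHom.comp_apply, AddMonoidHom.add_apply, AddMonoidHom.smul_apply, map_add,
      map_zsmul, hw', hu', AddMonoidHom.id_apply]
    linear_combination (norm := module) k • hB (u (z y)) + l • hB (w (v y)) + hkl • y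

theorem nonempty_addEquiv_of_coprime
    (hu : ∀ x, v (u x) = m • x) (hu' : ∀ y, u (v y) = m • y)
    (hw : ∀ x, z (w x) = m' • x) (hw' : ∀ y, w (z y) = m' • y) (hcop : m.Coprime m')
    {e : ℕ} (he : e ≠ 0) (hA : ∀ x : A, e • x = 0) (hB : ∀ y : B, e • y = 0) :
    Nonempty (A ≃+ B) := by
  obtain ⟨s, t, rfl, hs, ht, hst⟩ := Nat.exists_mul_eq_coprime_of_coprime hcop he
  have hcop' : (m' * t ^ 2).Coprime (m * s ^ 2) :=
    (hcop.symm.mul_right (hs.symm.pow_right 2)).mul_left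
      ((ht.mul_right (hst.symm.pow_right 2)).pow_left 2)
  refine nonempty_addEquiv_of_isCoprime_mul_sq hu hu' hw hw' s t (fun x => ?_) (fun y => ?_) ?_
  · exact_mod_cast hA x
  · exact_mod_cast hB y
  · exact_mod_cast Nat.isCoprime_iff_coprime.mpr hcop'

end

theorem elliptic_isogenies_coprime_degrees_points_isomorphic_general
    {K : Type} [Field K]
    (E E' : WeierstrassCurve K)
    (m m' : ℕ) (hcop : Nat.Coprime m m')
    -- an isogeny φ : E → E' of degree m, with dual φd
    (φ : ∀ (L : Type) [Field L] [Algebra K L], E⟮L⟯ →+ E'⟮L⟯)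
    (φd : ∀ (L : Type) [Field L] [Algebra K L], E'⟮L⟯ →+ E⟮L⟯)
    (hφ : ∀ (L : Type) [Field L] [Algebra K L] (x : E⟮L⟯), φd L (φ L x) = m • x)
    (hφ' : ∀ (L : Type) [Field L] [Algebra K L] (y : E'⟮L⟯), φ L (φd L y) = m • y)
    -- an isogeny ψ : E → E' of degree m', with dual ψd
    (ψ : ∀ (L : Type) [Field L] [Algebra K L], E⟮L⟯ →+ E'⟮L⟯)
    (ψd : ∀ (L : Type) [Field L] [Algebra K L], E'⟮L⟯ →+ E⟮L⟯)
    (hψ : ∀ (L : Type) [Field L] [Algebra K L] (x : E⟮L⟯), ψd L (ψ L x) = m' • x)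
    (hψ' : ∀ (L : Type) [Field L] [Algebra K L] (y : E'⟮L⟯), ψ L (ψd L y) = m' • y) :
    -- E(F_{q^n}) ≅ E'(F_{q^n}) for every finite extension F_{q^n} of F_q
    ∀ (L : Type) [Field L] [Algebra K L] [Finite L], Nonempty (E⟮L⟯ ≃+ E'⟮L⟯) := by
  intro L _ _ _
  refine nonempty_addEquiv_of_coprime (hφ L) (hφ' L) (hψ L) (hψ' L) hcop
    (e := Nat.card (E⟮L⟯) * Nat.card (E'⟮L⟯)) (mul_ne_zero Nat.card_pos.ne' Nat.card_pos.ne')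
    (fun x => ?_) (fun y => ?_)
  · rw [mul_comm, mul_nsmul, card_nsmul_eq_zero']
  · rw [mul_nsmul, card_nsmul_eq_zero']

/-- Let `E` and `E'` be elliptic curves over a finite field `F_q` and
suppose there exist isogenies `φ : E → E'` and `φ' : E → E'` of coprime degrees `m` and `m'`.
Then for every `n ≥ 1`, the groups `E(F_{q^n})` and `E'(F_{q^n})` are isomorphic as abelian
groups.

An isogeny of degree `m` is modelled by the group homomorphisms it induces on the points over
every field extension `L/F_q`, together with the dual isogeny: the two composites are
multiplication by `m`.  The fields `F_{q^n}` are the finite extensions `L` of `F_q`. -/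
theorem elliptic_isogenies_coprime_degrees_points_isomorphic
    {K : Type} [Field K] [Fintype K]
    (E E' : WeierstrassCurve K) [E.IsElliptic] [E'.IsElliptic]
    (m m' : ℕ) (hm : 0 < m) (hm' : 0 < m') (hcop : Nat.Coprime m m')
    -- an isogeny φ : E → E' of degree m, with dual φd
    (φ : ∀ (L : Type) [Field L] [Algebra K L], E⟮L⟯ →+ E'⟮L⟯)
    (φd : ∀ (L : Type) [Field L] [Algebra K L], E'⟮L⟯ →+ E⟮L⟯)
    (hφ : ∀ (L : Type) [Field L] [Algebra K L] (x : E⟮L⟯), φd L (φ L x) = m • x)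
    (hφ' : ∀ (L : Type) [Field L] [Algebra K L] (y : E'⟮L⟯), φ L (φd L y) = m • y)
    -- an isogeny ψ : E → E' of degree m', with dual ψd
    (ψ : ∀ (L : Type) [Field L] [Algebra K L], E⟮L⟯ →+ E'⟮L⟯)
    (ψd : ∀ (L : Type) [Field L] [Algebra K L], E'⟮L⟯ →+ E⟮L⟯)
    (hψ : ∀ (L : Type) [Field L] [Algebra K L] (x : E⟮L⟯), ψd L (ψ L x) = m' • x)
    (hψ' : ∀ (L : Type) [Field L] [Algebra K L] (y : E'⟮L⟯), ψ L (ψd L y) = m' • y) :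
    -- E(F_{q^n}) ≅ E'(F_{q^n}) for every finite extension F_{q^n} of F_q
    ∀ (L : Type) [Field L] [Algebra K L] [Finite L], Nonempty (E⟮L⟯ ≃+ E'⟮L⟯) :=
  elliptic_isogenies_coprime_degrees_points_isomorphic_general E E' m m' hcop φ φd hφ hφ' ψ ψd hψ
    hψ'
end
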